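/- Let σ > 0 and let μ satisfy μ₁(σ) < μ < μ₂(σ), where μ₁(σ) = (√(2σ² + 4σ + 4) − σ − 2)/σ² and μ₂(σ) = 1/(σ + 4). Then the fully symmetric convergence–divergence game has exactly five equilibria in the unit square: {(x,y) ∈ [0,1] × [0,1] : F₁(x,y) = 0 and F₂(x,y) = 0} = {(1/2, 1/2), (1/2 + δ̃(σ,μ), 1/2 − δ̃(σ,μ)), (1/2 − δ̃(σ,μ), 1/2 + δ̃(σ,μ)), (1/2 + δ(σ,μ), 1/2 + δ(σ,μ)), (1/2 − δ(σ,μ), 1/2 − δ(σ,μ))}, where δ̃(σ,μ) = √(−(3σ² + 4σ)μ² − 2(σ² + 3σ + 2)μ + (σ + 1)²) / (2(σμ + σ + 1)) and δ(σ,μ) = √((σ² + 4σ)μ² − 2(σ + 2)μ + 1) / (2(σμ − 1)). -/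

import Mathlib

/-!
In the centred coordinates `x - 1/2`, `y - 1/2` the sum and the difference of the two
payoff gaps factor: `F₁ - F₂ = (x - y) · D` and `F₁ + F₂ = (x + y - 1) · S` with quadrics
`D` and `S`. An equilibrium is therefore the centre, a zero of `S` on the diagonal (the
convergent pair `1/2 ± δ`), a zero of `D` on the antidiagonal (the divergent pair
`1/2 ± δ̃`), or a common zero of `D` and `S`. A combination of `D` and `S` equals
`(2 + σ)² (x - y)² + σ²μ² + 2σμ + 4μ - 1`, and for `μ > 0` the bound `μ₁(σ) < μ` says
exactly that the constant term is positive, so there is no common zero. The bound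
`μ < μ₂(σ)` makes both radicands nonnegative and keeps the four off-centre points inside
the unit square.
-/

noncomputable def F1 (σ μ x y : ℝ) : ℝ :=
  ((1 - x) - μ) * x * (x + σ * x * (1 - y)) - (x - μ) * (1 - x) * ((1 - x) + σ * (1 - x) * y)

noncomputable def F2 (σ μ x y : ℝ) : ℝ :=
  ((1 - y) - μ) * y * (y + σ * y * (1 - x)) - (y - μ) * (1 - y) * ((1 - y) + σ * (1 - y) * x)

noncomputable def deltaTilde (σ μ : ℝ) : ℝ :=
  Real.sqrt (-(3 * σ^2 + 4 * σ) * μ^2 - 2 * (σ^2 + 3 * σ + 2) * μ + (σ + 1)^2) /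
    (2 * (σ * μ + σ + 1))

noncomputable def deltaD (σ μ : ℝ) : ℝ :=
  Real.sqrt ((σ^2 + 4 * σ) * μ^2 - 2 * (σ + 2) * μ + 1) / (2 * (σ * μ - 1))

section QuadraticRoots

variable {c b : ℝ}

theorem four_mul_sq_sqrt_mul_div (hc : c ≠ 0) (hcb : 0 ≤ c * b) :
    4 * c * (√(c * b) / (2 * c)) ^ 2 = b := by
  rw [div_pow, Real.sq_sqrt hcb]
  field_simp
  ring

theorem four_mul_mul_sq_eq_iff (hc : c ≠ 0) (hcb : 0 ≤ c * b) (u : ℝ) :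
    4 * c * u ^ 2 = b ↔ u = √(c * b) / (2 * c) ∨ u = -(√(c * b) / (2 * c)) := by
  conv_lhs => rw [← four_mul_sq_sqrt_mul_div hc hcb]
  rw [mul_right_inj' (mul_ne_zero four_ne_zero hc), sq_eq_sq_iff_eq_or_eq_neg]

theorem abs_sqrt_mul_div_le_half (h : c * b ≤ c ^ 2) : |√(c * b) / (2 * c)| ≤ 1 / 2 := by
  rcases eq_or_ne c 0 with rfl | hc
  · norm_num
  have hsqrt : √(c * b) ≤ |c| := by
    simpa only [Real.sqrt_sq_eq_abs] using Real.sqrt_le_sqrt h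
  rw [abs_div, abs_of_nonneg (Real.sqrt_nonneg _), abs_mul, abs_two,
    div_le_iff₀ (by positivity)]
  linarith

end QuadraticRoots

theorem deltaTilde_eq (σ μ : ℝ) :
    deltaTilde σ μ =
      √((σ * μ + σ + 1) * (σ + 1 - (3 * σ + 4) * μ)) / (2 * (σ * μ + σ + 1)) := by
  rw [deltaTilde]
  ring_nf

theorem deltaD_eq (σ μ : ℝ) :
    deltaD σ μ = √((σ * μ - 1) * ((σ + 4) * μ - 1)) / (2 * (σ * μ - 1)) := by
  rw [deltaD]
  ring_nf

section Factorization

variable (σ μ : ℝ)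

noncomputable def divergentFactor (x y : ℝ) : ℝ :=
  (2 + σ) * (1/4 - μ) + σ * (1/4 - μ/2)
    - (2 + σ) * ((x - 1/2)^2 + (x - 1/2) * (y - 1/2) + (y - 1/2)^2)
    + σ * (1 + 2 * μ) * (x - 1/2) * (y - 1/2)

noncomputable def convergentFactor (x y : ℝ) : ℝ :=
  (2 + σ) * (1/4 - μ) - σ * (1/4 - μ/2)
    - (2 + σ) * ((x - 1/2)^2 - (x - 1/2) * (y - 1/2) + (y - 1/2)^2)
    + σ * (1 + 2 * μ) * (x - 1/2) * (y - 1/2)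

theorem F1_sub_F2 (x y : ℝ) :
    F1 σ μ x y - F2 σ μ x y = (x - y) * divergentFactor σ μ x y := by
  rw [F1, F2, divergentFactor]
  ring

theorem F1_add_F2 (x y : ℝ) :
    F1 σ μ x y + F2 σ μ x y = (x + y - 1) * convergentFactor σ μ x y := by
  rw [F1, F2, convergentFactor]
  ring

theorem F1_eq_zero_and_F2_eq_zero_iff (x y : ℝ) :
    F1 σ μ x y = 0 ∧ F2 σ μ x y = 0 ↔
      (x - y) * divergentFactor σ μ x y = 0 ∧ (x + y - 1) * convergentFactor σ μ x y = 0 := by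
  rw [← F1_sub_F2, ← F1_add_F2]
  constructor <;> rintro ⟨h₁, h₂⟩ <;> constructor <;> linarith

theorem divergentFactor_antidiag_eq_zero_iff (x : ℝ) :
    divergentFactor σ μ x (1 - x) = 0 ↔
      4 * (σ * μ + σ + 1) * (x - 1/2) ^ 2 = σ + 1 - (3 * σ + 4) * μ := by
  rw [divergentFactor]
  constructor <;> intro h
  · linear_combination (-2 : ℝ) * h
  · linear_combination (-1/2 : ℝ) * h

theorem convergentFactor_diag_eq_zero_iff (x : ℝ) :
    convergentFactor σ μ x x = 0 ↔
      4 * (σ * μ - 1) * (x - 1/2) ^ 2 = (σ + 4) * μ - 1 := by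
  rw [convergentFactor]
  constructor <;> intro h
  · linear_combination (2 : ℝ) * h
  · linear_combination (1/2 : ℝ) * h

theorem divergentFactor_convergentFactor_combination (x y : ℝ) :
    (1 - σ * μ) * divergentFactor σ μ x y + (σ * μ - σ - 3) * convergentFactor σ μ x y =
      (2 + σ) ^ 2 * (x - y) ^ 2 + (σ ^ 2 * μ ^ 2 + 2 * σ * μ + 4 * μ - 1) := by
  rw [divergentFactor, convergentFactor]
  ring

theorem convergentFactor_ne_zero_of_divergentFactor_eq_zero
    (hμ : 1 < σ ^ 2 * μ ^ 2 + 2 * σ * μ + 4 * μ) {x y : ℝ}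
    (hD : divergentFactor σ μ x y = 0) : convergentFactor σ μ x y ≠ 0 := by
  intro hS
  have := divergentFactor_convergentFactor_combination σ μ x y
  rw [hD, hS] at this
  nlinarith [sq_nonneg ((2 + σ) * (x - y))]

end Factorization

section Equilibria

variable {σ μ : ℝ}

theorem F1_eq_zero_and_F2_eq_zero_iff_of_one_lt (hμ : 1 < σ ^ 2 * μ ^ 2 + 2 * σ * μ + 4 * μ)
    (x y : ℝ) :
    F1 σ μ x y = 0 ∧ F2 σ μ x y = 0 ↔
      (x = 1/2 ∧ y = 1/2) ∨
      (y = 1 - x ∧ 4 * (σ * μ + σ + 1) * (x - 1/2) ^ 2 = σ + 1 - (3 * σ + 4) * μ) ∨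
      (y = x ∧ 4 * (σ * μ - 1) * (x - 1/2) ^ 2 = (σ + 4) * μ - 1) := by
  rw [F1_eq_zero_and_F2_eq_zero_iff, mul_eq_zero, mul_eq_zero, sub_eq_zero, sub_eq_zero]
  constructor
  · rintro ⟨hxy | hD, hsum | hS⟩
    · exact Or.inl ⟨by linarith, by linarith⟩
    · subst hxy
      exact Or.inr (Or.inr ⟨rfl, (convergentFactor_diag_eq_zero_iff σ μ x).1 hS⟩)
    · obtain rfl : y = 1 - x := by linarith
      exact Or.inr (Or.inl ⟨rfl, (divergentFactor_antidiag_eq_zero_iff σ μ x).1 hD⟩)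
    · exact absurd hS (convergentFactor_ne_zero_of_divergentFactor_eq_zero σ μ hμ hD)
  · rintro (⟨rfl, rfl⟩ | ⟨rfl, h⟩ | ⟨rfl, h⟩)
    · exact ⟨Or.inl rfl, Or.inl (by norm_num)⟩
    · exact ⟨Or.inr ((divergentFactor_antidiag_eq_zero_iff σ μ x).2 h), Or.inl (by ring)⟩
    · exact ⟨Or.inl rfl, Or.inr ((convergentFactor_diag_eq_zero_iff σ μ _).2 h)⟩

noncomputable def fiveEquilibria (σ μ : ℝ) : Set (ℝ × ℝ) :=
  {(1/2, 1/2),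
   (1/2 + deltaTilde σ μ, 1/2 - deltaTilde σ μ),
   (1/2 - deltaTilde σ μ, 1/2 + deltaTilde σ μ),
   (1/2 + deltaD σ μ, 1/2 + deltaD σ μ),
   (1/2 - deltaD σ μ, 1/2 - deltaD σ μ)}

variable (hσ : 0 ≤ σ) (hμ : 0 ≤ μ) (hμ₂ : (σ + 4) * μ < 1)
include hσ hμ hμ₂

theorem F1_eq_zero_and_F2_eq_zero_iff_mem_fiveEquilibria
    (hμ₁ : 1 < σ ^ 2 * μ ^ 2 + 2 * σ * μ + 4 * μ) (p : ℝ × ℝ) :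
    F1 σ μ p.1 p.2 = 0 ∧ F2 σ μ p.1 p.2 = 0 ↔ p ∈ fiveEquilibria σ μ := by
  have hc₁ : 0 < σ * μ + σ + 1 := by positivity
  have hc₂ : σ * μ - 1 < 0 := by nlinarith
  have hb₁ : 0 ≤ σ + 1 - (3 * σ + 4) * μ := by nlinarith
  obtain ⟨x, y⟩ := p
  simp only [fiveEquilibria, Set.mem_insert_iff, Set.mem_singleton_iff, Prod.mk.injEq]
  rw [F1_eq_zero_and_F2_eq_zero_iff_of_one_lt hμ₁,
    four_mul_mul_sq_eq_iff hc₁.ne' (by positivity), ← deltaTilde_eq,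
    four_mul_mul_sq_eq_iff hc₂.ne (by nlinarith), ← deltaD_eq]
  constructor
  · rintro (h | ⟨rfl, h | h⟩ | ⟨rfl, h | h⟩)
    · exact Or.inl h
    · exact Or.inr (Or.inl ⟨by linarith, by linarith⟩)
    · exact Or.inr (Or.inr (Or.inl ⟨by linarith, by linarith⟩))
    · exact Or.inr (Or.inr (Or.inr (Or.inl ⟨by linarith, by linarith⟩)))
    · exact Or.inr (Or.inr (Or.inr (Or.inr ⟨by linarith, by linarith⟩)))
  · rintro (h | ⟨rfl, rfl⟩ | ⟨rfl, rfl⟩ | ⟨rfl, rfl⟩ | ⟨rfl, rfl⟩)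
    · exact Or.inl h
    · exact Or.inr (Or.inl ⟨by ring, Or.inl (by ring)⟩)
    · exact Or.inr (Or.inl ⟨by ring, Or.inr (by ring)⟩)
    · exact Or.inr (Or.inr ⟨rfl, Or.inl (by ring)⟩)
    · exact Or.inr (Or.inr ⟨rfl, Or.inr (by ring)⟩)

theorem fiveEquilibria_subset_unitSquare :
    fiveEquilibria σ μ ⊆ Set.Icc (0:ℝ) 1 ×ˢ Set.Icc (0:ℝ) 1 := by
  have ht : |deltaTilde σ μ| ≤ 1/2 := by
    have : 0 ≤ (σ * μ + σ + 1) * ((4 * σ + 4) * μ) := by positivity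
    rw [deltaTilde_eq]
    exact abs_sqrt_mul_div_le_half (by linear_combination this)
  have hd : |deltaD σ μ| ≤ 1/2 := by
    rw [deltaD_eq]
    exact abs_sqrt_mul_div_le_half (by nlinarith)
  rw [abs_le] at ht hd
  rintro _ (rfl | rfl | rfl | rfl | rfl) <;>
    exact ⟨⟨by linarith, by linarith⟩, by linarith, by linarith⟩

end Equilibria

theorem sqrt_sub_div_sq_pos {σ : ℝ} (hσ : 0 < σ) :
    0 < (Real.sqrt (2 * σ^2 + 4 * σ + 4) - σ - 2) / σ^2 := by
  have : σ + 2 < Real.sqrt (2 * σ^2 + 4 * σ + 4) :=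
    Real.lt_sqrt_of_sq_lt (by nlinarith)
  exact div_pos (by linarith) (by positivity)

theorem one_lt_of_sqrt_sub_div_sq_lt {σ μ : ℝ} (hσ : σ ≠ 0)
    (h : (Real.sqrt (2 * σ^2 + 4 * σ + 4) - σ - 2) / σ^2 < μ) :
    1 < σ ^ 2 * μ ^ 2 + 2 * σ * μ + 4 * μ := by
  have hσ2 : 0 < σ ^ 2 := by positivity
  have hlt : Real.sqrt (2 * σ^2 + 4 * σ + 4) < σ ^ 2 * μ + σ + 2 := by
    rw [div_lt_iff₀ hσ2] at h
    linarith
  have hsq : 2 * σ^2 + 4 * σ + 4 < (σ ^ 2 * μ + σ + 2) ^ 2 :=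
    (Real.sqrt_lt' (by linarith [Real.sqrt_nonneg (2 * σ^2 + 4 * σ + 4)])).1 hlt
  nlinarith

theorem phase_III_five_equilibria (σ μ : ℝ) (hσ : 0 < σ)
    (hlo : (Real.sqrt (2 * σ^2 + 4 * σ + 4) - σ - 2) / σ^2 < μ) (hhi : μ < 1 / (σ + 4)) :
    {p : ℝ × ℝ | p ∈ Set.Icc (0:ℝ) 1 ×ˢ Set.Icc (0:ℝ) 1 ∧
        F1 σ μ p.1 p.2 = 0 ∧ F2 σ μ p.1 p.2 = 0} =
      {(1/2, 1/2),
       (1/2 + deltaTilde σ μ, 1/2 - deltaTilde σ μ),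
       (1/2 - deltaTilde σ μ, 1/2 + deltaTilde σ μ),
       (1/2 + deltaD σ μ, 1/2 + deltaD σ μ),
       (1/2 - deltaD σ μ, 1/2 - deltaD σ μ)} := by
  have hμ : 0 < μ := (sqrt_sub_div_sq_pos hσ).trans hlo
  have hμ₂ : (σ + 4) * μ < 1 := by
    rwa [lt_div_iff₀ (by linarith), mul_comm] at hhi
  have hμ₁ := one_lt_of_sqrt_sub_div_sq_lt hσ.ne' hlo
  ext p
  rw [Set.mem_ofPred_eq, F1_eq_zero_and_F2_eq_zero_iff_mem_fiveEquilibria hσ.le hμ.le hμ₂ hμ₁]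
  exact ⟨And.right, fun hp => ⟨fiveEquilibria_subset_unitSquare hσ.le hμ.le hμ₂ hp, hp⟩⟩
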